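/- Let A be a nonsingular n×n matrix, b an n-vector, and x = A⁻¹ b. For any index set T ⊆ {1,...,n}, the components x_i for i ∈ T are determined by the entries of A and the components b_j for j in the closure of T with respect to Aᵀ; i.e., if b and b' agree on closure_{Aᵀ}(T), and the closure is closed with respect to Aᵀ, then (A⁻¹b)_i = (A⁻¹b')_i for all i ∈ T. -/

import Mathlib

open scoped Matrix

/-- The directed graph of a matrix: edge from i to j when i ≠ j and M i j ≠ 0. -/
def matEdge {n : ℕ} (M : Matrix (Fin n) (Fin n) ℝ) (i j : Fin n) : Prop :=
  i ≠ j ∧ M i j ≠ 0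

/-- The closure of a vertex set V with respect to M: the vertices from which
there is a directed path in G(M) to a vertex of V. -/
def matClosure {n : ℕ} (M : Matrix (Fin n) (Fin n) ℝ) (V : Set (Fin n)) : Set (Fin n) :=
  {i | ∃ j ∈ V, Relation.ReflTransGen (matEdge M) i j}

/-!
Let `S` be the closure of `T` with respect to `Aᵀ`, and `S'` its complement. No edge of
`G(Aᵀ)` leads from `S'` into `S`, so the block `A_SS'` vanishes and
`det A = det A_SS * det A_S'S'`; in particular `A_SS` is invertible. For `x = A⁻¹ (b - b')`
the equations `(A x)_S = (b - b')_S = 0` then read `A_SS x_S = 0`, so `x_S = 0`.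
-/

namespace Matrix

variable {ι R : Type*} [Fintype ι] [CommRing R]
  {A : Matrix ι ι R} {p : ι → Prop} [DecidablePred p]

theorem isUnit_det_toSquareBlockProp [DecidableEq ι] (hz : ∀ j, p j → ∀ i, ¬ p i → A j i = 0)
    (hA : IsUnit A.det) : IsUnit (A.toSquareBlockProp p).det :=
  isUnit_of_mul_isUnit_left (twoBlockTriangular_det' A p hz ▸ hA)

theorem toSquareBlockProp_mulVec_restrict (hz : ∀ j, p j → ∀ i, ¬ p i → A j i = 0)
    (x : ι → R) (j : {a // p a}) :
    (A.toSquareBlockProp p *ᵥ fun i => x i) j = (A *ᵥ x) j := by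
  have hout : ∑ i : {a // ¬ p a}, A j i * x i = 0 :=
    Finset.sum_eq_zero fun i _ => by rw [hz j j.2 i i.2, zero_mul]
  rw [mulVec, dotProduct, mulVec, dotProduct,
    ← Fintype.sum_subtype_add_sum_subtype p, hout, add_zero]
  rfl

theorem eq_zero_of_mulVec_eq_zero_on [DecidableEq ι] (hz : ∀ j, p j → ∀ i, ¬ p i → A j i = 0)
    (hA : IsUnit A.det) {x : ι → R} (hx : ∀ j, p j → (A *ᵥ x) j = 0) :
    ∀ i, p i → x i = 0 := by
  have hblock : (A.toSquareBlockProp p *ᵥ fun i => x i) = 0 := funext fun j => by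
    rw [toSquareBlockProp_mulVec_restrict hz, hx j j.2, Pi.zero_apply]
  have hunit : IsUnit (A.toSquareBlockProp p) :=
    (isUnit_iff_isUnit_det _).2 (isUnit_det_toSquareBlockProp hz hA)
  have hrestrict : (fun i : {a // p a} => x i) = 0 :=
    mulVec_injective_of_isUnit hunit (by rw [hblock, mulVec_zero])
  exact fun i hi => congrFun hrestrict ⟨i, hi⟩

theorem inv_mulVec_eq_on_of_eq_on [DecidableEq ι] (hz : ∀ j, p j → ∀ i, ¬ p i → A j i = 0)
    (hA : IsUnit A.det) {b b' : ι → R} (hb : ∀ j, p j → b j = b' j) :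
    ∀ i, p i → (A⁻¹ *ᵥ b) i = (A⁻¹ *ᵥ b') i := by
  have hx : ∀ j, p j → (A *ᵥ (A⁻¹ *ᵥ b - A⁻¹ *ᵥ b')) j = 0 := fun j hj => by
    rw [mulVec_sub, mulVec_mulVec, mulVec_mulVec, mul_nonsing_inv A hA, one_mulVec,
      one_mulVec, Pi.sub_apply, hb j hj, sub_self]
  exact fun i hi => sub_eq_zero.1 (eq_zero_of_mulVec_eq_zero_on hz hA hx i hi)

end Matrix

theorem matClosure_of_matEdge {n : ℕ} {M : Matrix (Fin n) (Fin n) ℝ} {V : Set (Fin n)}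
    {i j : Fin n} (hj : j ∈ matClosure M V) (hij : matEdge M i j) : i ∈ matClosure M V :=
  let ⟨k, hk, hjk⟩ := hj
  ⟨k, hk, Relation.ReflTransGen.head hij hjk⟩

theorem subset_matClosure {n : ℕ} (M : Matrix (Fin n) (Fin n) ℝ) (V : Set (Fin n)) :
    V ⊆ matClosure M V :=
  fun i hi => ⟨i, hi, Relation.ReflTransGen.refl⟩

theorem apply_eq_zero_of_mem_matClosure_transpose {n : ℕ} {A : Matrix (Fin n) (Fin n) ℝ}
    {T : Set (Fin n)} {i j : Fin n} (hj : j ∈ matClosure Aᵀ T) (hi : i ∉ matClosure Aᵀ T) :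
    A j i = 0 := by
  by_contra hne
  exact hi (matClosure_of_matEdge hj ⟨fun h => hi (h ▸ hj), hne⟩)

theorem stmt_15_general {n : ℕ} (A : Matrix (Fin n) (Fin n) ℝ) (hA : IsUnit A.det)
    (T : Set (Fin n)) (b b' : Fin n → ℝ)
    (hagree : ∀ j ∈ matClosure Aᵀ T, b j = b' j) :
    ∀ i ∈ T, (A⁻¹ *ᵥ b) i = (A⁻¹ *ᵥ b') i := by
  classical
  have hblock : ∀ j ∈ matClosure Aᵀ T, ∀ i ∉ matClosure Aᵀ T, A j i = 0 :=
    fun _ hj _ hi => apply_eq_zero_of_mem_matClosure_transpose hj hi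
  exact fun i hi => Matrix.inv_mulVec_eq_on_of_eq_on (p := (· ∈ matClosure Aᵀ T))
    hblock hA hagree i (subset_matClosure Aᵀ T hi)

/-- For nonsingular A, the components of x = A⁻¹ b on an index
set T are determined by the components of b on the closure of T with respect
to Aᵀ: if b and b' agree on closure_{Aᵀ}(T) (which is closed w.r.t. Aᵀ), then
(A⁻¹ b)ᵢ = (A⁻¹ b')ᵢ for all i ∈ T. -/
theorem stmt_15 {n : ℕ} (A : Matrix (Fin n) (Fin n) ℝ) (hA : IsUnit A.det)
    (T : Set (Fin n)) (b b' : Fin n → ℝ)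
    (hclosed : ∀ i j : Fin n, j ∈ matClosure Aᵀ T → matEdge Aᵀ i j →
      i ∈ matClosure Aᵀ T)
    (hagree : ∀ j ∈ matClosure Aᵀ T, b j = b' j) :
    ∀ i ∈ T, (A⁻¹ *ᵥ b) i = (A⁻¹ *ᵥ b') i :=
  stmt_15_general A hA T b b' hagree
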